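/- arXiv:1510.05982 — 6 statements merged into one kernel-verified Lean document; each statement's English description precedes it below -/
import Mathlib

section
/- Let V = {v₁,…,v_n} be a finite set equipped with a weight function w: V → ℝ≥0 such that w(v₁) ≥ w(v₂) ≥ … ≥ w(v_n), let Y ⊆ V, and let s > 0 be a real. If X is an s-sparse subset of Y, then w(X) ≤ (1/s)·w(Y), where w(A) denotes Σ_{v∈A} w(v). -/
/-- The set of the first `k` elements of `Y` in the linear order. -/
def firstK {V : Type*} [LinearOrder V] (Y : Finset V) (k : ℕ) : Finset V :=
  ((Y.sort (· ≤ ·)).take k).toFinset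

/-- A nonempty subset `X ⊆ Y` is `s`-principal in `Y` if `X ⊆ Y_{s·|X|}`,
i.e. all elements of `X` are among the first `⌊s·|X|⌋` elements of `Y`. -/
def IsPrincipalIn {V : Type*} [LinearOrder V] (s : ℝ) (Y X : Finset V) : Prop :=
  X.Nonempty ∧ X ⊆ firstK Y ⌊s * (X.card : ℝ)⌋₊

/-- A subset `X` is `s`-sparse in `Y` if it contains no `s`-principal subset in `Y`. -/
def IsSparseIn {V : Type*} [LinearOrder V] (s : ℝ) (Y X : Finset V) : Prop :=
  ∀ Z ⊆ X, ¬ IsPrincipalIn s Y Z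

/-!
Layer-cake argument: for nonnegative weights, `∑ v ∈ A, w v = ∫ t in Ioi 0, #{v ∈ A | t < w v}`.
Because `w` is antitone, each level set `{v ∈ Y | t < w v}` is the initial segment `Y_k` with
`k = #{v ∈ Y | t < w v}`, and the level set of `X` lies inside it. Sparseness says this subset of
`X` is not `s`-principal, so `s · #{v ∈ X | t < w v} ≤ k`; integrating over `t` gives
`s · w(X) ≤ w(Y)`.
-/

open Finset MeasureTheory Set

theorem List.filter_eq_takeWhile_of_pairwise {α : Type*} {p : α → Bool} {l : List α}
    (h : l.Pairwise fun a b => p b → p a) : l.filter p = l.takeWhile p := by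
  induction l with
  | nil => rfl
  | cons a l ih =>
    rw [List.pairwise_cons] at h
    by_cases ha : p a
    · rw [List.filter_cons_of_pos ha, List.takeWhile_cons_of_pos ha, ih h.2]
    · rw [List.filter_cons_of_neg ha, List.takeWhile_cons_of_neg ha, List.filter_eq_nil_iff]
      exact fun b hb hpb => ha (h.1 b hb hpb)

section FirstK

variable {V : Type*} [LinearOrder V]

theorem firstK_mono (Y : Finset V) {k k' : ℕ} (h : k ≤ k') : firstK Y k ⊆ firstK Y k' :=
  fun _ hx => List.mem_toFinset.2 <| List.take_subset_take_left _ h <| List.mem_toFinset.1 hx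

theorem filter_eq_firstK_card_filter (Y : Finset V) {p : V → Prop} [DecidablePred p]
    (hp : ∀ ⦃a b⦄, a ≤ b → p b → p a) : Y.filter p = firstK Y #(Y.filter p) := by
  set L := Y.sort (· ≤ ·)
  have hfilter : (L.filter (p ·)).toFinset = Y.filter p := by
    rw [List.toFinset_filter, sort_toFinset]
    simp
  have hprefix : L.take (L.filter (p ·)).length = L.filter (p ·) := by
    rw [List.filter_eq_takeWhile_of_pairwise ((Y.pairwise_sort _).imp fun hab hb => by
      simpa using hp hab (by simpa using hb))]
    exact (List.prefix_iff_eq_take.1 (List.takeWhile_prefix _)).symm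
  rw [← hfilter, List.toFinset_card_of_nodup ((Y.sort_nodup _).filter _), firstK, hprefix]

end FirstK

theorem IsSparseIn.mul_card_filter_le {V : Type*} [LinearOrder V] {s : ℝ} {Y X : Finset V}
    (hX : IsSparseIn s Y X) (hXY : X ⊆ Y) {p : V → Prop} [DecidablePred p]
    (hp : ∀ ⦃a b⦄, a ≤ b → p b → p a) : s * #(X.filter p) ≤ #(Y.filter p) := by
  rcases (X.filter p).eq_empty_or_nonempty with hempty | hne
  · simp [hempty]
  refine Nat.lt_of_floor_lt (not_le.1 fun hle => hX _ (filter_subset p X) ⟨hne, ?_⟩) |>.le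
  calc X.filter p ⊆ Y.filter p := filter_subset_filter p hXY
    _ = firstK Y #(Y.filter p) := filter_eq_firstK_card_filter Y hp
    _ ⊆ _ := firstK_mono Y hle

section LayerCake

theorem ite_lt_eq_indicator_Iio (c t : ℝ) :
    (if t < c then (1 : ℝ) else 0) = (Iio c).indicator 1 t := by
  simp [indicator_apply]

theorem integrableOn_Ioi_ite_lt (c : ℝ) :
    IntegrableOn (fun t : ℝ => if t < c then (1 : ℝ) else 0) (Ioi 0) := by
  simp only [ite_lt_eq_indicator_Iio]
  rw [IntegrableOn, integrable_indicator_iff measurableSet_Iio, IntegrableOn,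
    Measure.restrict_restrict measurableSet_Iio, Iio_inter_Ioi]
  exact integrableOn_const measure_Ioo_lt_top.ne

theorem setIntegral_Ioi_ite_lt {c : ℝ} (hc : 0 ≤ c) :
    ∫ t in Ioi (0 : ℝ), (if t < c then (1 : ℝ) else 0) = c := by
  simp only [ite_lt_eq_indicator_Iio]
  rw [integral_indicator_one measurableSet_Iio, measureReal_restrict_apply measurableSet_Iio,
    Iio_inter_Ioi, Real.volume_real_Ioo_of_le hc, sub_zero]

variable {ι : Type*}

theorem integrableOn_card_filter_lt (A : Finset ι) (f : ι → ℝ) :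
    IntegrableOn (fun t => (#{i ∈ A | t < f i} : ℝ)) (Ioi 0) := by
  simp only [card_filter, Nat.cast_sum, Nat.cast_ite, Nat.cast_one, Nat.cast_zero]
  exact integrable_finsetSum _ fun i _ => integrableOn_Ioi_ite_lt (f i)

theorem sum_eq_setIntegral_card_filter_lt (A : Finset ι) {f : ι → ℝ} (hf : ∀ i ∈ A, 0 ≤ f i) :
    ∑ i ∈ A, f i = ∫ t in Ioi 0, (#{i ∈ A | t < f i} : ℝ) := by
  simp only [card_filter, Nat.cast_sum, Nat.cast_ite, Nat.cast_one, Nat.cast_zero]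
  rw [integral_finsetSum _ fun i _ => integrableOn_Ioi_ite_lt (f i)]
  exact sum_congr rfl fun i hi => (setIntegral_Ioi_ite_lt (hf i hi)).symm

theorem mul_sum_le_sum_of_forall_mul_card_filter_lt_le {A B : Finset ι} {f g : ι → ℝ}
    (hf : ∀ i ∈ A, 0 ≤ f i) (hg : ∀ i ∈ B, 0 ≤ g i) {s : ℝ}
    (h : ∀ t > 0, s * #{i ∈ A | t < f i} ≤ #{i ∈ B | t < g i}) :
    s * ∑ i ∈ A, f i ≤ ∑ i ∈ B, g i := by
  rw [sum_eq_setIntegral_card_filter_lt A hf, sum_eq_setIntegral_card_filter_lt B hg,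
    ← integral_const_mul]
  exact setIntegral_mono_on ((integrableOn_card_filter_lt A f).const_mul s)
    (integrableOn_card_filter_lt B g) measurableSet_Ioi h

end LayerCake

/-- **Claim 2.3.** If the vertices are listed in non-increasing order of their
nonnegative weights (so `w` is antitone with respect to the linear order) and
`X` is an `s`-sparse subset of `Y`, then `w(X) ≤ (1/s)·w(Y)`. -/
theorem weight_le_of_isSparseIn {V : Type*} [LinearOrder V] (w : V → ℝ)
    (hw0 : ∀ v, 0 ≤ w v) (hw : Antitone w) (Y X : Finset V) (s : ℝ) (hs : 0 < s)
    (hXY : X ⊆ Y) (hX : IsSparseIn s Y X) :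
    ∑ v ∈ X, w v ≤ (1 / s) * ∑ v ∈ Y, w v := by
  have key : s * ∑ v ∈ X, w v ≤ ∑ v ∈ Y, w v :=
    mul_sum_le_sum_of_forall_mul_card_filter_lt_le (fun v _ => hw0 v) (fun v _ => hw0 v)
      fun t _ => hX.mul_card_filter_le hXY fun _ _ hab hb => hb.trans_le (hw hab)
  rwa [one_div, inv_mul_eq_div, le_div_iff₀ hs, mul_comm]
end

section
/- Let G be a simple graph on a vertex set V = {v₁,…,v_n} with a fixed linear ordering of its vertices, let t be a real number, set d = 2·log₂(e·t²), and suppose t ≥ 2(d+1). Then there exists an orientation of the edges of G such that every t-principal vertex-set of G whose induced subgraph has average degree at least d contains a directed cycle under this orientation. -/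
open Finset

/-- An orientation of a simple graph `G`: a relation choosing exactly one
direction for each edge of `G` (and relating no non-adjacent pair). -/
def IsOrientation {V : Type*} (G : SimpleGraph V) (D : V → V → Prop) : Prop :=
  (∀ u v, D u v → G.Adj u v) ∧ ∀ u v, G.Adj u v → (D u v ↔ ¬ D v u)

/-- A set `A` of vertices is acyclic for the digraph `D` if the digraph induced
on `A` contains no directed cycle (no vertex reaches itself by a nonempty
directed walk inside `A`). -/
def IsAcyclicOn {V : Type*} (D : V → V → Prop) (A : Set V) : Prop :=
  ∀ x ∈ A, ¬ Relation.TransGen (fun a b => a ∈ A ∧ b ∈ A ∧ D a b) x x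

/-- A set `A` of vertices contains a directed cycle of the digraph `D`. -/
def HasDirCycleOn {V : Type*} (D : V → V → Prop) (A : Set V) : Prop :=
  ∃ x ∈ A, Relation.TransGen (fun a b => a ∈ A ∧ b ∈ A ∧ D a b) x x

/-- The average degree of the subgraph of `G` induced by the vertex-set `A`,
i.e. `2·e(G[A])/|A|` (the filter counts ordered adjacent pairs). -/
noncomputable def avgDeg {V : Type*} (G : SimpleGraph V) [DecidableRel G.Adj]
    (A : Finset V) : ℝ :=
  (((A ×ˢ A).filter fun p => G.Adj p.1 p.2).card : ℝ) / (A.card : ℝ)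

/-!
Orient every edge independently and uniformly at random. An acyclic orientation of `G[A]` is
determined by its out-degrees (peel off a sink), so at most `∏_{v ∈ A} (deg_A v + 1)` of the
`2^{e(A)}` orientations of `G[A]` are acyclic. By `log (1 + x) ≤ log (1 + d) + (x - d) / (d + 1)`
and `2^{d/2} = e t²`, this is at most `2^{e(A)} r^{|A|}` with `r = (d + 1) / (e t²)` once `G[A]` has
average degree at least `d`. There are at most `C(⌊t b⌋, b) ≤ (e t)^b` sets of size `b` that are
`t`-principal, and `e t r = (d + 1) / t ≤ 1 / 2`, so by the union bound the probability that some
principal dense set is acyclic is at most `∑_{b ≥ 1} 2^{-b} < 1`.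
-/

theorem IsAcyclicOn.mono {V : Type*} {D : V → V → Prop} {A B : Set V} (hB : B ⊆ A)
    (hA : IsAcyclicOn D A) : IsAcyclicOn D B := fun x hx hcyc =>
  hA x (hB hx) (Relation.TransGen.mono (fun _ _ ⟨ha, hb, hab⟩ => ⟨hB ha, hB hb, hab⟩) _ _ hcyc)

theorem IsAcyclicOn.exists_sink {V : Type*} {D : V → V → Prop} {A : Finset V}
    (hA : IsAcyclicOn D (A : Set V)) (hne : A.Nonempty) : ∃ v ∈ A, ∀ u ∈ A, ¬ D v u := by
  let R : A → A → Prop := fun a b =>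
    Relation.TransGen (fun a b => a ∈ (A : Set V) ∧ b ∈ (A : Set V) ∧ D a b) b a
  have : IsTrans A R := ⟨fun _ _ _ hab hbc => hbc.trans hab⟩
  have : Std.Irrefl R := ⟨fun a => hA a a.2⟩
  obtain ⟨a, ha⟩ := hne
  obtain ⟨⟨v, hv⟩, -, hmin⟩ :=
    (Finite.wellFounded_of_trans_of_irrefl R).has_min Set.univ ⟨⟨a, ha⟩, trivial⟩
  exact ⟨v, hv, fun u hu hvu => hmin ⟨u, hu⟩ trivial (.single ⟨hv, hu, hvu⟩)⟩

open Classical in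
theorem card_filter_erase_add_ite {V : Type*} (A : Finset V) (p : V → Prop) {v : V}
    (hv : v ∈ A) : #{u ∈ A.erase v | p u} + (if p v then 1 else 0) = #{u ∈ A | p u} := by
  rw [Finset.filter_erase]
  split_ifs with h
  · exact Finset.card_erase_add_one (Finset.mem_filter.2 ⟨hv, h⟩)
  · rw [Finset.erase_eq_of_notMem (fun h' => h (Finset.mem_filter.1 h').2), add_zero]

open Classical in
theorem IsOrientation.iff_of_isAcyclicOn_of_card_out_eq {V : Type*} {G : SimpleGraph V}
    {D D' : V → V → Prop} (hD : IsOrientation G D) (hD' : IsOrientation G D') {A : Finset V}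
    (hA : IsAcyclicOn D (A : Set V)) (hA' : IsAcyclicOn D' (A : Set V))
    (hout : ∀ v ∈ A, #{u ∈ A | D v u} = #{u ∈ A | D' v u}) :
    ∀ u ∈ A, ∀ v ∈ A, D u v ↔ D' u v := by
  induction A using Finset.strongInduction with
  | _ A ih =>
  obtain rfl | hne := A.eq_empty_or_nonempty
  · simp
  obtain ⟨w, hw, hsink⟩ := hA.exists_sink hne
  have hsink' : ∀ u ∈ A, ¬ D' w u := by
    have : #{u ∈ A | D' w u} = 0 := by
      rw [← hout w hw, Finset.card_eq_zero, Finset.filter_eq_empty_iff]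
      exact hsink
    simpa [Finset.filter_eq_empty_iff] using this
  have into_sink : ∀ u ∈ A, D u w ↔ D' u w := fun u hu => by
    by_cases hadj : G.Adj u w
    · simp [hD.2 u w hadj, hD'.2 u w hadj, hsink u hu, hsink' u hu]
    · exact ⟨fun h => absurd (hD.1 u w h) hadj, fun h => absurd (hD'.1 u w h) hadj⟩
  have hsub : A.erase w ⊆ A := Finset.erase_subset w A
  have hrest := ih (A.erase w) (Finset.erase_ssubset hw)
    (hA.mono (Finset.coe_subset.2 hsub)) (hA'.mono (Finset.coe_subset.2 hsub)) fun v hv => by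
      have h := hout v (hsub hv)
      rw [← card_filter_erase_add_ite A _ hw, ← card_filter_erase_add_ite A _ hw] at h
      simpa [into_sink v (hsub hv)] using h
  intro u hu v hv
  by_cases huw : u = w
  · subst huw; simp [hsink v hv, hsink' v hv]
  by_cases hvw : v = w
  · subst hvw; exact into_sink u hu
  exact hrest u (Finset.mem_erase.2 ⟨huw, hu⟩) v (Finset.mem_erase.2 ⟨hvw, hv⟩)

section Estimates

open Real

theorem add_one_le_mul_exp {c : ℝ} (hc : 0 < c + 1) (x : ℝ) :
    x + 1 ≤ (c + 1) * exp ((x - c) / (c + 1)) :=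
  calc x + 1 = (c + 1) * ((x - c) / (c + 1) + 1) := by field_simp; ring
    _ ≤ (c + 1) * exp ((x - c) / (c + 1)) := by gcongr; exact add_one_le_exp _

theorem prod_add_one_le_pow_mul_exp {ι : Type*} (s : Finset ι) {x : ι → ℝ}
    (hx : ∀ i ∈ s, 0 ≤ x i) {c : ℝ} (hc : 0 < c + 1) :
    ∏ i ∈ s, (x i + 1) ≤ (c + 1) ^ #s * exp ((∑ i ∈ s, x i - c * #s) / (c + 1)) :=
  calc ∏ i ∈ s, (x i + 1) ≤ ∏ i ∈ s, (c + 1) * exp ((x i - c) / (c + 1)) :=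
        Finset.prod_le_prod (fun i hi => by linarith [hx i hi]) fun i _ =>
          add_one_le_mul_exp hc (x i)
    _ = _ := by
      rw [Finset.prod_mul_distrib, Finset.prod_const, ← exp_sum, ← Finset.sum_div,
        Finset.sum_sub_distrib, Finset.sum_const, nsmul_eq_mul, mul_comm c]

theorem prod_add_one_le_two_pow_mul {ι : Type*} (s : Finset ι) (x : ι → ℕ) {e : ℕ} {d : ℝ}
    (hsum : ∑ i ∈ s, x i = 2 * e) (hd : 2 ≤ d * log 2) (hde : d * #s ≤ 2 * e) :
    ∏ i ∈ s, ((x i : ℝ) + 1) ≤ 2 ^ e * ((d + 1) / 2 ^ (d / 2)) ^ #s := by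
  have hd0 : 0 < d := pos_of_mul_pos_left (by linarith) (log_pos one_lt_two).le
  have hsum' : ∑ i ∈ s, (x i : ℝ) = 2 * e := by exact_mod_cast hsum
  calc ∏ i ∈ s, ((x i : ℝ) + 1) ≤ (d + 1) ^ #s * exp ((2 * e - d * #s) / (d + 1)) := by
        simpa [hsum'] using prod_add_one_le_pow_mul_exp s (fun i _ => Nat.cast_nonneg (x i))
          (by linarith : 0 < d + 1)
    _ ≤ (d + 1) ^ #s * exp (log 2 * (e - d / 2 * #s)) := by
        gcongr
        have hy : 0 ≤ 2 * (e : ℝ) - d * #s := by linarith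
        rw [div_le_iff₀ (by linarith)]
        nlinarith [mul_le_mul_of_nonneg_left hd hy, log_pos one_lt_two]
    _ = 2 ^ e * ((d + 1) / 2 ^ (d / 2)) ^ #s := by
        rw [← rpow_def_of_pos two_pos, rpow_sub two_pos, rpow_natCast,
          rpow_mul_natCast zero_le_two, div_pow]
        ring

theorem choose_floor_mul_le {s : ℝ} (hs : 0 ≤ s) (b : ℕ) :
    (⌊s * b⌋₊.choose b : ℝ) ≤ (exp 1 * s) ^ b :=
  calc (⌊s * b⌋₊.choose b : ℝ) ≤ (⌊s * b⌋₊ : ℝ) ^ b / b.factorial := Nat.choose_le_pow_div b _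
    _ ≤ (s * b) ^ b / b.factorial := by gcongr; exact Nat.floor_le (by positivity)
    _ = s ^ b * ((b : ℝ) ^ b / b.factorial) := by ring
    _ ≤ s ^ b * exp b := by gcongr; exact pow_div_factorial_le_exp _ b.cast_nonneg b
    _ = (exp 1 * s) ^ b := by rw [← exp_one_pow, mul_pow, mul_comm]

end Estimates

section Principal

variable {V : Type*} [LinearOrder V]

theorem card_firstK_le (Y : Finset V) (k : ℕ) : #(firstK Y k) ≤ k :=
  (List.toFinset_card_le _).trans (List.length_take_le k _)

theorem IsPrincipalIn.mem_powersetCard {s : ℝ} {Y X : Finset V} (hX : IsPrincipalIn s Y X) :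
    X ∈ (firstK Y ⌊s * #X⌋₊).powersetCard #X :=
  Finset.mem_powersetCard.2 ⟨hX.2, rfl⟩

theorem IsPrincipalIn.one_le {s : ℝ} {Y X : Finset V} (hX : IsPrincipalIn s Y X) : 1 ≤ s := by
  have hpos : 0 < #X := Finset.card_pos.2 hX.1
  have hle : #X ≤ ⌊s * #X⌋₊ := (Finset.card_le_card hX.2).trans (card_firstK_le Y _)
  rw [Nat.le_floor_iff' hpos.ne'] at hle
  exact le_of_mul_le_mul_right (by simpa using hle) (by exact_mod_cast hpos)

open Classical in
theorem card_isPrincipalIn_card_eq_le (Y : Finset V) (s : ℝ) (b : ℕ) :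
    #{X ∈ Y.powerset | IsPrincipalIn s Y X ∧ #X = b} ≤ ⌊s * b⌋₊.choose b := by
  refine (Finset.card_le_card fun X hX => ?_).trans
    ((Finset.card_powersetCard _ _).trans_le (Nat.choose_le_choose b (card_firstK_le Y _)))
  obtain ⟨-, hX, hb⟩ := Finset.mem_filter.1 hX
  exact hb ▸ hX.mem_powersetCard

open Classical in
theorem sum_isPrincipalIn_pow_card_lt_one (Y : Finset V) {s r : ℝ} (hs : 0 ≤ s) (hr : 0 ≤ r)
    (hsr : Real.exp 1 * s * r ≤ 1 / 2) :
    ∑ X ∈ Y.powerset with IsPrincipalIn s Y X, r ^ #X < 1 := by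
  have hmaps : ∀ X ∈ {X ∈ Y.powerset | IsPrincipalIn s Y X},
      #X ∈ Finset.Ico 1 (#Y + 1) := fun X hX => by
    obtain ⟨hXY, hX⟩ := Finset.mem_filter.1 hX
    exact Finset.mem_Ico.2 ⟨Finset.card_pos.2 hX.1,
      Nat.lt_succ_of_le (Finset.card_le_card (Finset.mem_powerset.1 hXY))⟩
  have hfiber : ∀ b, ∑ X ∈ Y.powerset with IsPrincipalIn s Y X ∧ #X = b, r ^ #X ≤ (1 / 2) ^ b := by
    intro b
    calc ∑ X ∈ Y.powerset with IsPrincipalIn s Y X ∧ #X = b, r ^ #X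
        = #{X ∈ Y.powerset | IsPrincipalIn s Y X ∧ #X = b} * r ^ b := by
          rw [Finset.sum_congr rfl fun X hX => by rw [(Finset.mem_filter.1 hX).2.2],
            Finset.sum_const, nsmul_eq_mul]
      _ ≤ (Real.exp 1 * s) ^ b * r ^ b := by
          gcongr
          exact (Nat.cast_le.2 (card_isPrincipalIn_card_eq_le Y s b)).trans
            (choose_floor_mul_le hs b)
      _ ≤ (1 / 2) ^ b := by rw [← mul_pow]; gcongr
  rw [← Finset.sum_fiberwise_of_maps_to hmaps]
  calc _ ≤ ∑ b ∈ Finset.Ico 1 (#Y + 1), (1 / 2 : ℝ) ^ b :=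
        Finset.sum_le_sum fun b _ => by simpa only [Finset.filter_filter] using hfiber b
    _ < 1 := by
      rw [geom_sum_Ico' (by norm_num) (by omega), div_lt_one (by norm_num)]
      have : (0 : ℝ) < (1 / 2) ^ (#Y + 1) := by positivity
      linarith

end Principal

theorem Finset.exists_forall_not_of_sum_card_filter_lt {ι Ω : Type*} [Fintype Ω] (s : Finset ι)
    (P : ι → Ω → Prop) [∀ i, DecidablePred (P i)]
    (h : ∑ i ∈ s, #{ω | P i ω} < Fintype.card Ω) : ∃ ω, ∀ i ∈ s, ¬ P i ω := by
  classical
  by_contra! hcover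
  have hcard := (Finset.card_le_card fun ω (_ : ω ∈ Finset.univ) => by
    obtain ⟨i, hi, hω⟩ := hcover ω
    exact Finset.mem_biUnion.2 ⟨i, hi, by simpa using hω⟩).trans
      (Finset.card_biUnion_le (s := s) (t := fun i => {ω | P i ω}))
  rw [Finset.card_univ] at hcard
  omega

section Orientations

variable {V : Type*} (G : SimpleGraph V)

def degIn [DecidableRel G.Adj] (A : Finset V) (v : V) : ℕ := #{u ∈ A | G.Adj v u}

theorem sum_degIn [DecidableRel G.Adj] (A : Finset V) :
    ∑ v ∈ A, degIn G A v = #{p ∈ A ×ˢ A | G.Adj p.1 p.2} := by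
  simp only [degIn, Finset.card_filter, Finset.sum_product]

variable [LinearOrder V]

/-- The orientation of `G` encoded by `f`: the edge `uv` with `u < v` points from `u` to `v`
iff `f (u, v) = true`; the values of `f` elsewhere are ignored. -/
def orientBy (f : V × V → Bool) (u v : V) : Prop :=
  G.Adj u v ∧ if u < v then f (u, v) = true else f (v, u) = false

theorem isOrientation_orientBy (f : V × V → Bool) : IsOrientation G (orientBy G f) := by
  refine ⟨fun u v h => h.1, fun u v h => ?_⟩
  rcases h.ne.lt_or_gt with huv | hvu
  · simp only [orientBy, if_pos huv, if_neg huv.asymm, h, h.symm, true_and]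
    cases f (u, v) <;> simp
  · simp only [orientBy, if_neg hvu.asymm, if_pos hvu, h, h.symm, true_and]
    cases f (v, u) <;> simp

theorem orientBy_iff_of_lt {f : V × V → Bool} {u v : V} (h : G.Adj u v) (huv : u < v) :
    orientBy G f u v ↔ f (u, v) = true := by
  simp [orientBy, h, huv]

variable [DecidableRel G.Adj]

def edgesIn (A : Finset V) : Finset (V × V) := {p ∈ A ×ˢ A | G.Adj p.1 p.2 ∧ p.1 < p.2}

theorem card_adj_pairs_eq_two_mul_card_edgesIn (A : Finset V) :
    #{p ∈ A ×ˢ A | G.Adj p.1 p.2} = 2 * #(edgesIn G A) := by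
  have hswap : #{p ∈ A ×ˢ A | G.Adj p.1 p.2 ∧ ¬ p.1 < p.2} = #(edgesIn G A) := by
    refine Finset.card_nbij' Prod.swap Prod.swap ?_ ?_ (fun _ _ => rfl) (fun _ _ => rfl)
    · rintro ⟨a, b⟩ h
      simp only [edgesIn, Finset.coe_filter, Finset.mem_product, Set.mem_ofPred_eq] at h ⊢
      exact ⟨h.1.symm, h.2.1.symm, lt_of_le_of_ne (not_lt.1 h.2.2) h.2.1.ne'⟩
    · rintro ⟨a, b⟩ h
      simp only [edgesIn, Finset.coe_filter, Finset.mem_product, Set.mem_ofPred_eq] at h ⊢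
      exact ⟨h.1.symm, h.2.1.symm, h.2.2.asymm⟩
  rw [← Finset.card_filter_add_card_filter_not (fun p : V × V => p.1 < p.2),
    Finset.filter_filter, Finset.filter_filter, hswap, edgesIn, two_mul]

open Classical in
/-- Off the edges of `G[A]` the code `f` is free, and on them, for acyclic `orientBy G f`,
it is recovered from the out-degrees in `A` (`v` has at most `degIn G A v + 1` choices). -/
theorem card_isAcyclicOn_orientBy_le [Fintype V] (A : Finset V) :
    #{f : V × V → Bool | IsAcyclicOn (orientBy G f) A} ≤
      (∏ v ∈ A, (degIn G A v + 1)) * 2 ^ (Fintype.card (V × V) - #(edgesIn G A)) := by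
  set E := edgesIn G A
  set T := A.pi (fun v => Finset.range (degIn G A v + 1)) ×ˢ (Finset.univ : Finset (↥Eᶜ → Bool))
  let Φ : (V × V → Bool) → (∀ v ∈ A, ℕ) × (↥Eᶜ → Bool) :=
    fun f => (fun v _ => #{u ∈ A | orientBy G f v u}, fun p => f p)
  have hmaps : Set.MapsTo Φ {f | IsAcyclicOn (orientBy G f) A} T := fun f _ => by
    simp only [T, Φ, Finset.mem_coe, Finset.mem_product, Finset.mem_pi, Finset.mem_range,
      Finset.mem_univ, and_true]
    exact fun v _ => Nat.lt_succ_of_le (Finset.card_le_card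
      (Finset.monotone_filter_right A fun _ _ (h : orientBy G f v _) => h.1))
  have hinj : Set.InjOn Φ {f | IsAcyclicOn (orientBy G f) A} := by
    intro f hf g hg hfg
    simp only [Φ, Prod.ext_iff, funext_iff] at hfg
    have hiff := (isOrientation_orientBy G f).iff_of_isAcyclicOn_of_card_out_eq
      (isOrientation_orientBy G g) (by simpa using hf) (by simpa using hg) fun v hv => hfg.1 v hv
    funext p
    by_cases hp : p ∈ E
    · obtain ⟨⟨hu, hv⟩, hadj, hlt⟩ := by simpa [E, edgesIn] using hp
      have := hiff _ hu _ hv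
      rwa [orientBy_iff_of_lt G hadj hlt, orientBy_iff_of_lt G hadj hlt, ← Bool.eq_iff_iff] at this
    · exact hfg.2 ⟨p, Finset.mem_compl.2 hp⟩
  calc _ ≤ #T := Finset.card_le_card_of_injOn Φ (by simpa using hmaps) (by simpa using hinj)
    _ = _ := by
      rw [Finset.card_product, Finset.card_pi, Finset.card_univ, Fintype.card_fun,
        Fintype.card_coe, Finset.card_compl]
      simp

open Classical in
theorem card_isAcyclicOn_orientBy_le_of_le_avgDeg [Fintype V] {A : Finset V} (hA : A.Nonempty)
    {d : ℝ} (hd : 2 ≤ d * Real.log 2) (hdA : d ≤ avgDeg G A) :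
    (#{f : V × V → Bool | IsAcyclicOn (orientBy G f) A} : ℝ) ≤
      2 ^ Fintype.card (V × V) * ((d + 1) / 2 ^ (d / 2)) ^ #A := by
  have hdense : d * #A ≤ 2 * #(edgesIn G A) := by
    rw [avgDeg, le_div_iff₀ (by exact_mod_cast hA.card_pos),
      card_adj_pairs_eq_two_mul_card_edgesIn] at hdA
    exact_mod_cast hdA
  have hprod := prod_add_one_le_two_pow_mul A (degIn G A)
    (by rw [sum_degIn, card_adj_pairs_eq_two_mul_card_edgesIn]) hd hdense
  have hE : #(edgesIn G A) ≤ Fintype.card (V × V) := Finset.card_le_univ _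
  calc (#{f : V × V → Bool | IsAcyclicOn (orientBy G f) A} : ℝ)
      ≤ (∏ v ∈ A, ((degIn G A v : ℝ) + 1)) * 2 ^ (Fintype.card (V × V) - #(edgesIn G A)) := by
        exact_mod_cast card_isAcyclicOn_orientBy_le G A
    _ ≤ 2 ^ #(edgesIn G A) * ((d + 1) / 2 ^ (d / 2)) ^ #A *
          2 ^ (Fintype.card (V × V) - #(edgesIn G A)) := by gcongr
    _ = 2 ^ Fintype.card (V × V) * ((d + 1) / 2 ^ (d / 2)) ^ #A := by
        rw [mul_right_comm, ← pow_add, Nat.add_sub_cancel' hE]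

end Orientations

open Classical in
theorem exists_orientBy_not_isAcyclicOn_of_isPrincipalIn {V : Type*} [Fintype V] [LinearOrder V]
    (G : SimpleGraph V) [DecidableRel G.Adj] {t d : ℝ} (ht : 0 ≤ t) (hd : 2 ≤ d * Real.log 2)
    (htd : Real.exp 1 * t * ((d + 1) / 2 ^ (d / 2)) ≤ 1 / 2) :
    ∃ f : V × V → Bool, ∀ A, IsPrincipalIn t univ A → d ≤ avgDeg G A →
      ¬ IsAcyclicOn (orientBy G f) A := by
  set r := (d + 1) / (2 : ℝ) ^ (d / 2)
  have hr : 0 ≤ r := div_nonneg (by nlinarith [Real.log_pos one_lt_two]) (by positivity)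
  have hsum := sum_isPrincipalIn_pow_card_lt_one (univ : Finset V) ht hr htd
  rw [Finset.powerset_univ] at hsum
  set F : Finset (Finset V) := {A | IsPrincipalIn t univ A ∧ d ≤ avgDeg G A}
  have hbad : (∑ A ∈ F, #{f : V × V → Bool | IsAcyclicOn (orientBy G f) A} : ℝ) <
      2 ^ Fintype.card (V × V) :=
    calc _ ≤ ∑ A ∈ F, 2 ^ Fintype.card (V × V) * r ^ #A := Finset.sum_le_sum fun A hA => by
          obtain ⟨hA, hdA⟩ := (Finset.mem_filter.1 hA).2
          exact card_isAcyclicOn_orientBy_le_of_le_avgDeg G hA.1 hd hdA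
      _ ≤ 2 ^ Fintype.card (V × V) * ∑ A with IsPrincipalIn t univ A, r ^ #A := by
          rw [← Finset.mul_sum]
          gcongr
          exact Finset.monotone_filter_right _ fun _ _ h => h.1
      _ < 2 ^ Fintype.card (V × V) := mul_lt_of_lt_one_right (by positivity) hsum
  obtain ⟨f, hf⟩ := Finset.exists_forall_not_of_sum_card_filter_lt F
    (fun A f => IsAcyclicOn (orientBy G f) A) <| by
      rw [Fintype.card_fun, Fintype.card_bool]
      exact_mod_cast hbad
  exact ⟨f, fun A hA hdA => hf A (by simp [F, hA, hdA])⟩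

/-- **Lemma 2.4.** Suppose `d = 2 log₂(e t²)` and `t ≥ 2(d+1)`. Then there is an
orientation of `G` such that every `t`-principal vertex-set with average degree
at least `d` contains a directed cycle. (The vertices `v₁, …, v_n` are listed
according to the linear order on `V`; `t`-principal means `t`-principal in `V`.) -/
theorem exists_orientation_principal_dense_cyclic {V : Type*} [Fintype V]
    [LinearOrder V] (G : SimpleGraph V) [DecidableRel G.Adj] (t d : ℝ)
    (hd : d = 2 * Real.logb 2 (Real.exp 1 * t ^ 2)) (ht : 2 * (d + 1) ≤ t) :
    ∃ D : V → V → Prop, IsOrientation G D ∧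
      ∀ A : Finset V, IsPrincipalIn t Finset.univ A → d ≤ avgDeg G A →
        HasDirCycleOn D (A : Set V) := by
  by_cases ht1 : 1 ≤ t
  swap
  · exact ⟨orientBy G fun _ => true, isOrientation_orientBy G _,
      fun A hA _ => absurd hA.one_le ht1⟩
  have hlog : 1 ≤ Real.log (Real.exp 1 * t ^ 2) := by
    rw [Real.log_mul (Real.exp_pos 1).ne' (by positivity), Real.log_exp]
    linarith [Real.log_nonneg (one_le_pow₀ ht1 : 1 ≤ t ^ 2)]
  have hd2 : 2 ≤ d * Real.log 2 := by
    rw [hd, Real.logb, mul_assoc, div_mul_cancel₀ _ (Real.log_pos one_lt_two).ne']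
    linarith
  have hpow : (2 : ℝ) ^ (d / 2) = Real.exp 1 * t ^ 2 := by
    rw [hd, mul_div_cancel_left₀ _ two_ne_zero,
      Real.rpow_logb two_pos (by norm_num) (by positivity)]
  obtain ⟨f, hf⟩ := exists_orientBy_not_isAcyclicOn_of_isPrincipalIn G (zero_le_one.trans ht1) hd2
    (by rw [hpow, show Real.exp 1 * t * ((d + 1) / (Real.exp 1 * t ^ 2)) = (d + 1) / t by
          field_simp, div_le_iff₀ (by positivity)]; linarith)
  refine ⟨orientBy G f, isOrientation_orientBy G f, fun A hA hdA => ?_⟩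
  simpa [IsAcyclicOn, HasDirCycleOn] using hf A hA hdA
end

section
/- Let G be a finite simple graph on n vertices with at least one edge, and let α = log₂(d̄(G) + 1) / d̄(G), where d̄(G) = 2e(G)/n is the average degree of G. Then the number of acyclic orientations of G is at most (d̄(G)+1)^n = 2^{2α·e(G)}; equivalently, the proportion of the 2^{e(G)} orientations of G that are acyclic is at most 2^{-e(G)(1-2α)}. -/
open Finset

/-! An acyclic orientation `D₁` is determined by its out-degree sequence: if an orientation
`D₂` with the same out-degrees disagrees with `D₁` on an edge `x → y`, then `y` must also
disagree on one of its out-edges `y → z`, and so on; on a finite vertex set this walk along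
disagreeing edges closes up into a directed cycle of `D₁`. As the out-degree of `v` ranges over
`0, …, deg v`, there are at most `∏ᵥ (deg v + 1)` acyclic orientations, which AM-GM bounds by
`(d̄ + 1)ⁿ`. -/

theorem Relation.exists_transGen_self_of_forall_exists {α : Type*} [Finite α]
    {r : α → α → Prop} (h : ∀ x y, r x y → ∃ z, r y z) {a b : α} (hab : r a b) :
    ∃ x, Relation.TransGen r x x := by
  by_contra! hcyc
  have : IsTrans α (flip (Relation.TransGen r)) := ⟨fun _ _ _ hab hbc => hbc.trans hab⟩
  have : Std.Irrefl (flip (Relation.TransGen r)) := ⟨hcyc⟩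
  have hwf : WellFounded (flip r) := Subrelation.wf (r := flip (Relation.TransGen r))
    (fun h => Relation.TransGen.single h)
    (Finite.wellFounded_of_trans_of_irrefl (flip (Relation.TransGen r)))
  obtain ⟨m, ⟨x, hxm⟩, hmin⟩ := hwf.has_min {y | ∃ x, r x y} ⟨b, a, hab⟩
  obtain ⟨z, hmz⟩ := h x m hxm
  exact hmin z ⟨m, hmz⟩ hmz

theorem Real.prod_le_arith_mean_pow {ι : Type*} (s : Finset ι) (z : ι → ℝ)
    (hz : ∀ i ∈ s, 0 ≤ z i) : ∏ i ∈ s, z i ≤ ((∑ i ∈ s, z i) / #s) ^ #s := by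
  rcases s.eq_empty_or_nonempty with rfl | hs
  · simp
  have hmean := Real.geom_mean_le_arith_mean s (fun _ => 1) z (by simp)
    (by simpa using hs.card_pos) hz
  simp only [Real.rpow_one, sum_const, nsmul_eq_mul, mul_one, one_mul] at hmean
  calc ∏ i ∈ s, z i = ((∏ i ∈ s, z i) ^ ((#s : ℝ)⁻¹)) ^ #s :=
        (Real.rpow_inv_natCast_pow (prod_nonneg hz) hs.card_pos.ne').symm
    _ ≤ _ := pow_le_pow_left₀ (Real.rpow_nonneg (prod_nonneg hz) _) hmean _

section Orientation

variable {V : Type*} [Fintype V]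

def outDegree (D : V → V → Prop) [DecidableRel D] (v : V) : ℕ := #{w | D v w}

variable {G : SimpleGraph V} {D D₁ D₂ : V → V → Prop}
  [DecidableRel D] [DecidableRel D₁] [DecidableRel D₂]

theorem IsOrientation.outDegree_le_degree [DecidableRel G.Adj] (h : IsOrientation G D)
    (v : V) : outDegree D v ≤ G.degree v := by
  rw [← G.card_neighborFinset_eq_degree]
  exact card_le_card fun w hw => (G.mem_neighborFinset v w).mpr (h.1 v w (mem_filter.mp hw).2)

/-- `y` gains the in-edge from `x` under `D₂`, so to keep its out-degree it must lose an
out-edge to some `z`. -/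
theorem IsOrientation.exists_rel_not_rel (h₁ : IsOrientation G D₁) (h₂ : IsOrientation G D₂)
    (hdeg : ∀ v, outDegree D₁ v = outDegree D₂ v) {x y : V} (hxy : D₁ x y) (hxy' : ¬ D₂ x y) :
    ∃ z, D₁ y z ∧ ¬ D₂ y z := by
  have hadj := h₁.1 x y hxy
  by_contra! hsub
  have hout : univ.filter (D₁ y) = univ.filter (D₂ y) :=
    eq_of_subset_of_card_le (fun w hw => by simpa using hsub w (mem_filter.mp hw).2)
      (hdeg y).ge
  have hyx : D₂ y x := (h₂.2 y x hadj.symm).mpr hxy'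
  have hyx' : x ∈ univ.filter (D₁ y) := hout ▸ mem_filter.mpr ⟨mem_univ x, hyx⟩
  exact (h₁.2 x y hadj).mp hxy (mem_filter.mp hyx').2

theorem IsOrientation.le_of_outDegree_eq (h₁ : IsOrientation G D₁) (h₂ : IsOrientation G D₂)
    (hacyc : IsAcyclicOn D₁ Set.univ) (hdeg : ∀ v, outDegree D₁ v = outDegree D₂ v) :
    D₁ ≤ D₂ := by
  intro x y hxy
  by_contra hxy'
  obtain ⟨c, hc⟩ := Relation.exists_transGen_self_of_forall_exists
    (r := fun x y => D₁ x y ∧ ¬ D₂ x y)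
    (fun _ _ h => h₁.exists_rel_not_rel h₂ hdeg h.1 h.2) ⟨hxy, hxy'⟩
  exact hacyc c trivial (Relation.TransGen.mono (fun _ _ h => ⟨trivial, trivial, h.1⟩) _ _ hc)

theorem IsOrientation.eq_of_outDegree_eq (h₁ : IsOrientation G D₁) (h₂ : IsOrientation G D₂)
    (hacyc : IsAcyclicOn D₁ Set.univ) (hdeg : ∀ v, outDegree D₁ v = outDegree D₂ v) :
    D₁ = D₂ := by
  have hle := h₁.le_of_outDegree_eq h₂ hacyc hdeg
  refine le_antisymm hle fun x y hxy => ?_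
  have hadj := h₂.1 x y hxy
  by_contra hxy'
  exact (h₂.2 x y hadj).mp hxy (hle y x ((h₁.2 y x hadj.symm).mpr hxy'))

end Orientation

open Classical in
theorem card_acyclic_orientations_le_prod_degree {V : Type*} [Fintype V] [DecidableEq V]
    (G : SimpleGraph V) [DecidableRel G.Adj] :
    #{D : V → V → Bool | IsOrientation G (fun u v => D u v = true) ∧
        IsAcyclicOn (fun u v => D u v = true) Set.univ} ≤ ∏ v, (G.degree v + 1) := by
  calc _ ≤ #(Fintype.piFinset fun v => range (G.degree v + 1)) := ?_
    _ = ∏ v, (G.degree v + 1) := by simp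
  refine card_le_card_of_injOn (fun D v => outDegree (fun u w => D u w = true) v) ?_ ?_
  · intro D hD
    simp only [mem_coe, mem_filter, mem_univ, true_and] at hD
    simpa [Fintype.mem_piFinset, Nat.lt_succ_iff] using hD.1.outDegree_le_degree
  · intro D₁ hD₁ D₂ hD₂ hdeg
    simp only [mem_coe, mem_filter, mem_univ, true_and] at hD₁ hD₂
    have h := hD₁.1.eq_of_outDegree_eq hD₂.1 hD₁.2 (congrFun hdeg)
    funext u v
    exact Bool.eq_iff_iff.mpr (iff_of_eq (congrFun₂ h u v))

theorem SimpleGraph.prod_degree_add_one_le {V : Type*} [Fintype V] (G : SimpleGraph V)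
    [DecidableRel G.Adj] :
    ∏ v, ((G.degree v : ℝ) + 1) ≤ (2 * #G.edgeFinset / Fintype.card V + 1) ^ Fintype.card V := by
  calc _ ≤ ((∑ v, ((G.degree v : ℝ) + 1)) / #(univ : Finset V)) ^ #(univ : Finset V) :=
        Real.prod_le_arith_mean_pow _ _ fun _ _ => by positivity
    _ = _ := by
      rcases isEmpty_or_nonempty V with hV | hV
      · simp
      have hsum : ∑ v, (G.degree v : ℝ) = 2 * #G.edgeFinset := by
        exact_mod_cast G.sum_degrees_eq_twice_card_edges
      rw [card_univ, sum_add_distrib, hsum]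
      field_simp
      simp

theorem add_one_pow_eq_two_rpow {e : ℝ} (he : 0 ≤ e) (n : ℕ) :
    (2 * e / n + 1) ^ n = (2 : ℝ) ^ (2 * (Real.logb 2 (2 * e / n + 1) / (2 * e / n)) * e) := by
  set d := 2 * e / n with hd
  rcases eq_or_ne d 0 with h0 | h0
  · simp [h0]
  have hn : (n : ℝ) ≠ 0 := fun h => h0 (by simp [hd, h])
  have hdn : d * n = 2 * e := by
    rw [hd]
    field_simp
  have hexp : 2 * (Real.logb 2 (d + 1) / d) * e = Real.logb 2 (d + 1) * n := by
    field_simp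
    linear_combination -Real.logb 2 (d + 1) * hdn
  rw [hexp, Real.rpow_mul zero_le_two, Real.rpow_logb two_pos (by norm_num) (by positivity),
    Real.rpow_natCast]

open Classical in
theorem card_acyclic_orientations_le_rpow_general {V : Type*} [Fintype V] [DecidableEq V]
    (G : SimpleGraph V) [DecidableRel G.Adj]
    (dbar α : ℝ)
    (hdbar : dbar = 2 * (G.edgeFinset.card : ℝ) / (Fintype.card V : ℝ))
    (hα : α = Real.logb 2 (dbar + 1) / dbar) :
    ((Finset.univ.filter fun D : V → V → Bool =>
        IsOrientation G (fun u v => D u v = true) ∧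
        IsAcyclicOn (fun u v => D u v = true) Set.univ).card : ℝ)
      ≤ (dbar + 1) ^ (Fintype.card V) ∧
    (dbar + 1) ^ (Fintype.card V)
      = (2 : ℝ) ^ (2 * α * (G.edgeFinset.card : ℝ)) ∧
    ((Finset.univ.filter fun D : V → V → Bool =>
        IsOrientation G (fun u v => D u v = true) ∧
        IsAcyclicOn (fun u v => D u v = true) Set.univ).card : ℝ)
        / 2 ^ G.edgeFinset.card
      ≤ (2 : ℝ) ^ (-((G.edgeFinset.card : ℝ) * (1 - 2 * α))) := by
  have hcount : ((Finset.univ.filter fun D : V → V → Bool =>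
      IsOrientation G (fun u v => D u v = true) ∧
      IsAcyclicOn (fun u v => D u v = true) Set.univ).card : ℝ) ≤ (dbar + 1) ^ Fintype.card V :=
    calc _ ≤ ((∏ v, (G.degree v + 1) : ℕ) : ℝ) := by
          exact_mod_cast card_acyclic_orientations_le_prod_degree G
      _ = ∏ v, ((G.degree v : ℝ) + 1) := by push_cast; rfl
      _ ≤ _ := hdbar ▸ G.prod_degree_add_one_le
  have hpow : (dbar + 1) ^ Fintype.card V = (2 : ℝ) ^ (2 * α * (G.edgeFinset.card : ℝ)) := by
    subst hdbar hα
    exact add_one_pow_eq_two_rpow (by positivity) _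
  refine ⟨hcount, hpow, ?_⟩
  rw [div_le_iff₀ (by positivity), ← Real.rpow_natCast, ← Real.rpow_add two_pos]
  exact (hcount.trans_eq hpow).trans_eq (by congr 1; ring)

open Classical in
/-- **Corollary 2.7.** Let `G` have `n` vertices, at least one edge, average
degree `d̄ = 2e(G)/n`, and let `α = log₂(d̄+1)/d̄`. Then the number of acyclic
orientations of `G` is at most `(d̄+1)^n = 2^{2α·e(G)}`; equivalently, the
proportion of the `2^{e(G)}` orientations that are acyclic is at most
`2^{-e(G)(1-2α)}`. -/
theorem card_acyclic_orientations_le_rpow {V : Type*} [Fintype V] [DecidableEq V]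
    (G : SimpleGraph V) [DecidableRel G.Adj]
    (hE : 1 ≤ G.edgeFinset.card) (dbar α : ℝ)
    (hdbar : dbar = 2 * (G.edgeFinset.card : ℝ) / (Fintype.card V : ℝ))
    (hα : α = Real.logb 2 (dbar + 1) / dbar) :
    ((Finset.univ.filter fun D : V → V → Bool =>
        IsOrientation G (fun u v => D u v = true) ∧
        IsAcyclicOn (fun u v => D u v = true) Set.univ).card : ℝ)
      ≤ (dbar + 1) ^ (Fintype.card V) ∧
    (dbar + 1) ^ (Fintype.card V)
      = (2 : ℝ) ^ (2 * α * (G.edgeFinset.card : ℝ)) ∧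
    ((Finset.univ.filter fun D : V → V → Bool =>
        IsOrientation G (fun u v => D u v = true) ∧
        IsAcyclicOn (fun u v => D u v = true) Set.univ).card : ℝ)
        / 2 ^ G.edgeFinset.card
      ≤ (2 : ℝ) ^ (-((G.edgeFinset.card : ℝ) * (1 - 2 * α))) :=
  card_acyclic_orientations_le_rpow_general G dbar α hdbar hα
end

section
/- Let k be a positive integer, let H be a simple graph with chromatic number χ(H) > k, and let m be a positive integer. If there is an orientation D of the blow-up H^(m) such that within the blow-up of every edge of H, no subgraph isomorphic to the complete bipartite graph K_{⌈m/k⌉, ⌈m/k⌉} (with ⌈m/k⌉ vertices on each side of the corresponding complete bipartite blow-up) is acyclic, then the chromatic number of the digraph D is greater than k. -/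
/-- The chromatic number of a digraph `D`: the minimum number of acyclic
vertex-sets whose union is the whole vertex set. -/
noncomputable def digraphChrom {V : Type*} (D : V → V → Prop) : ℕ :=
  sInf {k : ℕ | ∃ f : V → Fin k, ∀ i : Fin k, IsAcyclicOn D {v | f v = i}}

/-- The dichromatic number of an undirected graph: the maximum chromatic number
over all orientations of its edges. -/
noncomputable def dichromatic {V : Type*} (G : SimpleGraph V) : ℕ :=
  sSup {k : ℕ | ∃ D : V → V → Prop, IsOrientation G D ∧ k = digraphChrom D}

/-- The blow-up of a simple graph `H` with power `m`: each vertex is replaced by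
an independent set of size `m`, each edge by a complete bipartite graph `K_{m,m}`. -/
def blowup {α : Type*} (H : SimpleGraph α) (m : ℕ) : SimpleGraph (α × Fin m) where
  Adj a b := H.Adj a.1 b.1
  symm := ⟨fun _ _ h => h.symm⟩
  loopless := ⟨fun a h => H.loopless.irrefl a.1 h⟩

/-!
Suppose `D` had an acyclic colouring `f` with `n ≤ k` colours. Within the blow-up of a vertex `x`
of `H`, some colour `c x` is used on at least `⌈m/k⌉` of its `m` copies, by pigeonhole. If `x y`
were an edge with `c x = c y`, the two chosen sets of copies would span a `K_{⌈m/k⌉,⌈m/k⌉}`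
inside a single colour class, which contains a directed cycle by hypothesis. So `c` properly
colours `H` with `n ≤ k` colours, contradicting `χ(H) > k`.
-/

theorem IsOrientation.irrefl {V : Type*} {G : SimpleGraph V} {D : V → V → Prop}
    (hD : IsOrientation G D) (v : V) : ¬ D v v :=
  fun h => G.irrefl (hD.1 v v h)

theorem isAcyclicOn_of_subsingleton {V : Type*} {D : V → V → Prop} {A : Set V}
    (hD : ∀ v, ¬ D v v) (hA : A.Subsingleton) : IsAcyclicOn D A := by
  intro x _ hcycle
  obtain ⟨a, b, ⟨ha, hb, hab⟩⟩ : ∃ a b, a ∈ A ∧ b ∈ A ∧ D a b := by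
    cases hcycle with
    | single h => exact ⟨_, _, h⟩
    | tail _ h => exact ⟨_, _, h⟩
  exact hD b (hA ha hb ▸ hab)

theorem HasDirCycleOn.not_isAcyclicOn_of_subset {V : Type*} {D : V → V → Prop} {A B : Set V}
    (h : HasDirCycleOn D A) (hAB : A ⊆ B) : ¬ IsAcyclicOn D B := by
  obtain ⟨x, hx, hcycle⟩ := h
  exact fun hB => hB x (hAB hx)
    (Relation.TransGen.mono (fun a b ⟨ha, hb, hab⟩ => ⟨hAB ha, hAB hb, hab⟩) _ _ hcycle)

/-- Irreflexivity makes singletons acyclic, so the set defining `digraphChrom` is nonempty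
and its infimum is attained rather than the junk value `sInf ∅ = 0`. -/
theorem exists_acyclic_coloring_digraphChrom {V : Type*} [Finite V] {D : V → V → Prop}
    (hD : ∀ v, ¬ D v v) :
    ∃ f : V → Fin (digraphChrom D), ∀ i, IsAcyclicOn D {v | f v = i} :=
  Nat.sInf_mem (s := {k | ∃ f : V → Fin k, ∀ i, IsAcyclicOn D {v | f v = i}})
    ⟨Nat.card V, Finite.equivFin V, fun _ => isAcyclicOn_of_subsingleton hD
      fun _ ha _ hb => (Finite.equivFin V).injective (ha.trans hb.symm)⟩

theorem mul_ceil_div_sub_one_lt {k m : ℕ} (hm : 0 < m) :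
    k * (⌈(m : ℝ) / k⌉₊ - 1) < m := by
  rcases Nat.eq_zero_or_pos k with rfl | hk
  · simpa using hm
  rcases Nat.eq_zero_or_pos ⌈(m : ℝ) / k⌉₊ with h0 | hpos
  · simpa [h0] using hm
  have hlt : ((⌈(m : ℝ) / k⌉₊ - 1 : ℕ) : ℝ) < m / k := Nat.lt_ceil.mp (by omega)
  rw [lt_div_iff₀ (by exact_mod_cast hk)] at hlt
  rw [mul_comm]
  exact_mod_cast hlt

theorem Fintype.exists_card_eq_ceil_div_of_card_le {β γ : Type*} [Fintype β] [Fintype γ]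
    (f : β → γ) {k : ℕ} (hγ : Fintype.card γ ≤ k) (hβ : 0 < Fintype.card β) :
    ∃ c : γ, ∃ S : Finset β,
      S.card = ⌈(Fintype.card β : ℝ) / k⌉₊ ∧ ∀ b ∈ S, f b = c := by
  classical
  obtain ⟨c, hc⟩ := Fintype.exists_lt_card_fiber_of_mul_lt_card f
    ((Nat.mul_le_mul_right _ hγ).trans_lt (mul_ceil_div_sub_one_lt hβ))
  obtain ⟨S, hS, hcard⟩ := Finset.exists_subset_card_eq (s := {b | f b = c})
    (n := ⌈(Fintype.card β : ℝ) / k⌉₊) (by omega)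
  exact ⟨c, S, hcard, fun b hb => (Finset.mem_filter.mp (hS hb)).2⟩

theorem colorable_of_acyclic_coloring_blowup {α : Type*} {H : SimpleGraph α} {k m n : ℕ}
    (hm : 0 < m) (hn : n ≤ k) {D : α × Fin m → α × Fin m → Prop}
    (hcyc : ∀ x y : α, H.Adj x y → ∀ S T : Finset (Fin m),
      S.card = ⌈(m : ℝ) / (k : ℝ)⌉₊ → T.card = ⌈(m : ℝ) / (k : ℝ)⌉₊ →
      HasDirCycleOn D {p : α × Fin m | (p.1 = x ∧ p.2 ∈ S) ∨ (p.1 = y ∧ p.2 ∈ T)})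
    (f : α × Fin m → Fin n) (hf : ∀ i, IsAcyclicOn D {v | f v = i}) :
    H.Colorable n := by
  have hfiber (x : α) := Fintype.exists_card_eq_ceil_div_of_card_le (fun j : Fin m => f (x, j))
    (by simpa using hn) (by simpa using hm)
  simp only [Fintype.card_fin] at hfiber
  choose c S hS hc using hfiber
  refine ⟨SimpleGraph.Coloring.mk c fun {x y} hxy hcxy => ?_⟩
  have hsub : {p : α × Fin m | (p.1 = x ∧ p.2 ∈ S x) ∨ (p.1 = y ∧ p.2 ∈ S y)} ⊆
      {v | f v = c x} := by
    rintro ⟨a, j⟩ (⟨rfl, hj⟩ | ⟨rfl, hj⟩)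
    · exact hc a j hj
    · exact (hc a j hj).trans hcxy.symm
  exact (hcyc x y hxy (S x) (S y) (hS x) (hS y)).not_isAcyclicOn_of_subset hsub (hf (c x))

theorem digraphChrom_blowup_gt_general {α : Type*} [Fintype α]
    (k m : ℕ) (hm : 0 < m) (H : SimpleGraph α)
    (hH : (k : ℕ∞) < H.chromaticNumber)
    (D : α × Fin m → α × Fin m → Prop) (hD : IsOrientation (blowup H m) D)
    (hcyc : ∀ x y : α, H.Adj x y → ∀ S T : Finset (Fin m),
      S.card = ⌈(m : ℝ) / (k : ℝ)⌉₊ → T.card = ⌈(m : ℝ) / (k : ℝ)⌉₊ →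
      HasDirCycleOn D {p : α × Fin m | (p.1 = x ∧ p.2 ∈ S) ∨ (p.1 = y ∧ p.2 ∈ T)}) :
    k < digraphChrom D := by
  by_contra! hle
  obtain ⟨f, hf⟩ := exists_acyclic_coloring_digraphChrom hD.irrefl
  have hcol : H.Colorable (digraphChrom D) :=
    colorable_of_acyclic_coloring_blowup hm hle hcyc f hf
  exact (hH.trans_le hcol.chromaticNumber_le).not_ge (by exact_mod_cast hle)

/-- **Lemma 3.1.** Let `χ(H) > k` and let `D` be an orientation of the blow-up
`H^(m)` such that in the blow-up of any edge of `H`, no copy of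
`K_{⌈m/k⌉,⌈m/k⌉}` (given by choosing `⌈m/k⌉` vertices in each side) is acyclic.
Then the chromatic number of the digraph `D` is greater than `k`. -/
theorem digraphChrom_blowup_gt {α : Type*} [Fintype α] [DecidableEq α]
    (k m : ℕ) (hk : 0 < k) (hm : 0 < m) (H : SimpleGraph α)
    (hH : (k : ℕ∞) < H.chromaticNumber)
    (D : α × Fin m → α × Fin m → Prop) (hD : IsOrientation (blowup H m) D)
    (hcyc : ∀ x y : α, H.Adj x y → ∀ S T : Finset (Fin m),
      S.card = ⌈(m : ℝ) / (k : ℝ)⌉₊ → T.card = ⌈(m : ℝ) / (k : ℝ)⌉₊ →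
      HasDirCycleOn D {p : α × Fin m | (p.1 = x ∧ p.2 ∈ S) ∨ (p.1 = y ∧ p.2 ∈ T)}) :
    k < digraphChrom D :=
  digraphChrom_blowup_gt_general k m hm H hH D hD hcyc
end

section
/- Let m, r be positive integers with 2 + 2·log₂(m) ≤ r. Then there exists an orientation of the complete bipartite graph K_{m,m} such that no subgraph isomorphic to K_{r,r} (with r vertices chosen on each side of the bipartition) is acyclic under this orientation. -/
/-!
Orient each edge of `K_{m,m}` from row `i` to column `j` or back according to an `m × m`
Boolean matrix `M`. A copy `S × T` of `K_{r,r}` contains the directed 4-cycle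
`i → j → i' → j' → i` unless the rows of `M` restricted to `S × T` form a chain under
inclusion; such a block is determined by the ranks of its rows in that chain and the weights of
its columns, so at most `r! (r+1)^r` of the `2^(r²)` blocks are cycle-free. Counting matrices,
some `M` works for all `C(m,r)²` copies at once as soon as `C(m,r)² r! (r+1)^r < 2^(r²)`, which
follows from `4 m² ≤ 2^r` and `(r+1)^r ≤ e^r r!`.
-/

open Finset
open scoped Nat

variable {α β : Type*}

/-- The entries of a directed 4-cycle `i → j → i' → j' → i` of `bipartiteOrientation M`. -/
def HasSwitch (M : α → β → Bool) (S : Finset α) (T : Finset β) : Prop :=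
  ∃ i ∈ S, ∃ i' ∈ S, ∃ j ∈ T, ∃ j' ∈ T,
    M i j = true ∧ M i' j = false ∧ M i' j' = true ∧ M i j' = false

instance (M : α → β → Bool) (S : Finset α) (T : Finset β) : Decidable (HasSwitch M S T) := by
  unfold HasSwitch; infer_instance

def bipartiteOrientation (M : α → β → Bool) : α ⊕ β → α ⊕ β → Prop
  | .inl i, .inr j => M i j = true
  | .inr j, .inl i => M i j = false
  | _, _ => False

theorem isOrientation_bipartiteOrientation (M : α → β → Bool) :
    IsOrientation (completeBipartiteGraph α β) (bipartiteOrientation M) := by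
  refine ⟨fun u v huv => ?_, fun u v huv => ?_⟩ <;>
    cases u <;> cases v <;> simp_all [bipartiteOrientation]

theorem hasDirCycleOn_bipartiteOrientation {M : α → β → Bool} {S : Finset α} {T : Finset β}
    (h : HasSwitch M S T) :
    HasDirCycleOn (bipartiteOrientation M)
      {p : α ⊕ β | (∃ i ∈ S, p = Sum.inl i) ∨ (∃ j ∈ T, p = Sum.inr j)} := by
  obtain ⟨i, hi, i', hi', j, hj, j', hj', hij, hi'j, hi'j', hij'⟩ := h
  have hAi : Sum.inl i ∈ {p : α ⊕ β | (∃ i ∈ S, p = Sum.inl i) ∨ (∃ j ∈ T, p = Sum.inr j)} :=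
    .inl ⟨i, hi, rfl⟩
  exact ⟨.inl i, hAi,
    .head ⟨hAi, .inr ⟨j, hj, rfl⟩, hij⟩ <| .head ⟨.inr ⟨j, hj, rfl⟩, .inl ⟨i', hi', rfl⟩, hi'j⟩ <|
      .head ⟨.inl ⟨i', hi', rfl⟩, .inr ⟨j', hj', rfl⟩, hi'j'⟩ <|
        .single ⟨.inr ⟨j', hj', rfl⟩, hAi, hij'⟩⟩

def rowWeight (M : α → β → Bool) (T : Finset β) (i : α) : ℕ := #{j ∈ T | M i j = true}

theorem rowWeight_lt_of_not_hasSwitch {M : α → β → Bool} {S : Finset α} {T : Finset β}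
    (h : ¬HasSwitch M S T) {i i' : α} {j : β} (hi : i ∈ S) (hi' : i' ∈ S) (hj : j ∈ T)
    (hij : M i j = false) (hi'j : M i' j = true) : rowWeight M T i < rowWeight M T i' := by
  refine card_lt_card <| (ssubset_iff_of_subset fun j' hj' => ?_).2
    ⟨j, by simp [hj, hi'j], by simp [hij]⟩
  simp only [mem_filter] at hj' ⊢
  refine ⟨hj'.1, ?_⟩
  by_contra hi'j'
  exact h ⟨i, hi, i', hi', j', hj'.1, j, hj, hj'.2, by simpa using hi'j', hi'j, hij⟩

section RowRank

variable [LinearOrder α] (M : α → β → Bool) (S : Finset α) (T : Finset β)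

def rowKey (i : α) : ℕ ×ₗ α := toLex (rowWeight M T i, i)

def rowRank (i : α) : ℕ := #{i' ∈ S | rowKey M T i < rowKey M T i'}

variable {M S T}

theorem rowRank_lt_card {i : α} (hi : i ∈ S) : rowRank M S T i < #S :=
  card_lt_card <| (ssubset_iff_of_subset (filter_subset _ _)).2 ⟨i, hi, by simp⟩

theorem rowRank_injOn : Set.InjOn (rowRank M S T) S := by
  have anti : ∀ ⦃i i'⦄, i' ∈ S → rowKey M T i < rowKey M T i' →
      rowRank M S T i' < rowRank M S T i := fun i i' hi' hlt =>
    card_lt_card <| (ssubset_iff_of_subset fun k hk => by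
      simp only [mem_filter] at hk ⊢; exact ⟨hk.1, hlt.trans hk.2⟩).2
      ⟨i', by simp [hi', hlt], by simp⟩
  intro i hi i' hi' heq
  rcases lt_trichotomy (rowKey M T i) (rowKey M T i') with hlt | heq' | hlt
  · exact absurd heq (anti hi' hlt).ne'
  · exact congrArg (fun k : ℕ ×ₗ α => (ofLex k).2) heq'
  · exact absurd heq (anti hi hlt).ne

/-- Without a switch the rows restricted to `T` form a chain, ordered by `rowKey`. -/
theorem apply_eq_true_iff_of_not_hasSwitch (h : ¬HasSwitch M S T) {i : α} {j : β}
    (hi : i ∈ S) (hj : j ∈ T) :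
    M i j = true ↔ rowRank M S T i < #{i' ∈ S | M i' j = true} := by
  constructor
  · intro hij
    refine card_lt_card <| (ssubset_iff_of_subset fun k hk => ?_).2 ⟨i, by simp [hi, hij], by simp⟩
    simp only [mem_filter] at hk ⊢
    refine ⟨hk.1, ?_⟩
    by_contra hkj
    have := rowWeight_lt_of_not_hasSwitch h hk.1 hi hj (by simpa using hkj) hij
    exact lt_asymm hk.2 (Prod.Lex.toLex_lt_toLex.2 (.inl this))
  · intro hlt
    by_contra hij
    refine hlt.not_ge <| card_le_card fun k hk => ?_
    simp only [mem_filter] at hk ⊢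
    exact ⟨hk.1, Prod.Lex.toLex_lt_toLex.2 <| .inl <|
      rowWeight_lt_of_not_hasSwitch h hi hk.1 hj (by simpa using hij) hk.2⟩

end RowRank

theorem card_not_hasSwitch_mul_le [Fintype α] [Fintype β] [DecidableEq α] [DecidableEq β]
    (S : Finset α) (T : Finset β) :
    #{M : α → β → Bool | ¬HasSwitch M S T} * 2 ^ (#S * #T)
      ≤ (#S)! * (#S + 1) ^ #T * 2 ^ (Fintype.card α * Fintype.card β) := by
  let _ : LinearOrder α := LinearOrder.lift' _ (Fintype.equivFin α).injective
  let code (M : α → β → Bool) :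
      (S ↪ Fin #S) × (T → Fin (#S + 1)) × (((S ×ˢ T)ᶜ : Finset (α × β)) → Bool) :=
    (⟨fun i => ⟨rowRank M S T i, rowRank_lt_card i.2⟩,
        fun i i' h => Subtype.ext (rowRank_injOn i.2 i'.2 (Fin.val_eq_of_eq h))⟩,
      fun j => ⟨#{i ∈ S | M i j = true}, Nat.lt_succ_of_le (card_filter_le _ _)⟩,
      fun p => M p.1.1 p.1.2)
  have hinj : Set.InjOn code ({M | ¬HasSwitch M S T} : Finset (α → β → Bool)) := by
    intro M₁ hM₁ M₂ hM₂ hcode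
    simp only [coe_filter, mem_univ, true_and, Set.mem_ofPred_eq] at hM₁ hM₂
    simp only [code, Prod.mk.injEq] at hcode
    obtain ⟨hrank, hcol, hout⟩ := hcode
    funext i j
    by_cases hij : (i, j) ∈ S ×ˢ T
    · obtain ⟨hi, hj⟩ := mem_product.1 hij
      have hrank' : rowRank M₁ S T i = rowRank M₂ S T i :=
        congrArg (fun e : S ↪ Fin #S => (e ⟨i, hi⟩ : ℕ)) hrank
      have hcol' : #{i ∈ S | M₁ i j = true} = #{i ∈ S | M₂ i j = true} :=
        congrArg Fin.val (congrFun hcol ⟨j, hj⟩)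
      rw [Bool.eq_iff_iff, apply_eq_true_iff_of_not_hasSwitch hM₁ hi hj,
        apply_eq_true_iff_of_not_hasSwitch hM₂ hi hj, hrank', hcol']
    · exact congrFun hout ⟨(i, j), mem_compl.2 hij⟩
  have hcard : #{M : α → β → Bool | ¬HasSwitch M S T}
      ≤ (#S)! * (#S + 1) ^ #T * 2 ^ (Fintype.card α * Fintype.card β - #S * #T) := by
    refine (card_le_card_of_injOn code (fun _ _ => mem_univ _) hinj).trans_eq ?_
    rw [Finset.card_univ, Fintype.card_prod, Fintype.card_prod, Fintype.card_embedding_eq,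
      Fintype.card_pi, Fintype.card_fun, Fintype.card_coe, Fintype.card_coe, card_compl,
      card_product]
    simp [mul_assoc, Nat.descFactorial_self]
  have hST : #S * #T ≤ Fintype.card α * Fintype.card β :=
    Nat.mul_le_mul (card_le_univ S) (card_le_univ T)
  calc _ ≤ (#S)! * (#S + 1) ^ #T * 2 ^ (Fintype.card α * Fintype.card β - #S * #T)
          * 2 ^ (#S * #T) := Nat.mul_le_mul_right _ hcard
    _ = _ := by rw [mul_assoc, ← pow_add, Nat.sub_add_cancel hST]

theorem exists_forall_hasSwitch [Fintype α] [Fintype β] [DecidableEq α] [DecidableEq β]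
    {s t : ℕ}
    (h : (Fintype.card α).choose s * (Fintype.card β).choose t * (s ! * (s + 1) ^ t)
      < 2 ^ (s * t)) :
    ∃ M : α → β → Bool, ∀ S T, #S = s → #T = t → HasSwitch M S T := by
  by_contra! hbad
  set P := (univ : Finset α).powersetCard s ×ˢ (univ : Finset β).powersetCard t
  have hcover :
      (univ : Finset (α → β → Bool)) ⊆ P.biUnion fun p => {M | ¬HasSwitch M p.1 p.2} := by
    intro M _
    obtain ⟨S, T, hS, hT, hM⟩ := hbad M
    exact mem_biUnion.2 ⟨(S, T), by simp [P, hS, hT], by simpa using hM⟩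
  have hP : #P = (Fintype.card α).choose s * (Fintype.card β).choose t := by
    simp [P]
  have := calc
    2 ^ (Fintype.card α * Fintype.card β) * 2 ^ (s * t)
      = #(univ : Finset (α → β → Bool)) * 2 ^ (s * t) := by simp [← pow_mul, mul_comm]
    _ ≤ ∑ p ∈ P, #{M : α → β → Bool | ¬HasSwitch M p.1 p.2} * 2 ^ (s * t) := by
      rw [← sum_mul]
      exact Nat.mul_le_mul_right _ ((card_le_card hcover).trans card_biUnion_le)
    _ ≤ ∑ p ∈ P, s ! * (s + 1) ^ t * 2 ^ (Fintype.card α * Fintype.card β) := by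
      refine sum_le_sum fun p hp => ?_
      obtain ⟨hS, hT⟩ := mem_product.1 hp
      rw [← (mem_powersetCard.1 hS).2, ← (mem_powersetCard.1 hT).2]
      exact card_not_hasSwitch_mul_le p.1 p.2
    _ < 2 ^ (s * t) * 2 ^ (Fintype.card α * Fintype.card β) := by
      rw [sum_const, hP, smul_eq_mul, ← mul_assoc]
      exact Nat.mul_lt_mul_of_pos_right h (by positivity)
  linarith

theorem add_one_pow_le_exp_mul_factorial (n : ℕ) : ((n : ℝ) + 1) ^ n ≤ Real.exp n * n ! := by
  induction n with
  | zero => simp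
  | succ n ih =>
    have hn : (0 : ℝ) < n + 1 := by positivity
    calc ((↑(n + 1) : ℝ) + 1) ^ (n + 1)
        = (1 + ((↑(n + 1) : ℝ))⁻¹) ^ (n + 1) * ((n + 1) * (n + 1) ^ n) := by
          push_cast
          rw [← pow_succ', ← mul_pow, add_mul, one_mul, inv_mul_cancel₀ hn.ne']
      _ ≤ Real.exp 1 * ((n + 1) * (Real.exp n * n !)) := by
          gcongr
          exact Real.one_add_inv_pow_le_exp
      _ = Real.exp ↑(n + 1) * ↑(n + 1)! := by
          rw [Nat.factorial_succ, Nat.cast_succ, Real.exp_add]; push_cast; ring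

theorem four_mul_sq_le_two_pow_of_logb_le {m r : ℕ} (hm : 0 < m)
    (h : 2 + 2 * Real.logb 2 m ≤ r) : 4 * m ^ 2 ≤ 2 ^ r := by
  have hlog : Real.logb 2 (4 * m ^ 2) ≤ r := by
    rw [Real.logb_mul (by norm_num) (by positivity), Real.logb_pow,
      show (4 : ℝ) = 2 ^ 2 by norm_num, Real.logb_pow, Real.logb_self_eq_one one_lt_two]
    push_cast
    linarith
  rw [Real.logb_le_iff_le_rpow one_lt_two (by positivity), Real.rpow_natCast] at hlog
  exact_mod_cast hlog

theorem choose_mul_choose_mul_lt_two_pow {m r : ℕ} (hm : 0 < m) (hmr : 4 * m ^ 2 ≤ 2 ^ r) :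
    m.choose r * m.choose r * (r ! * (r + 1) ^ r) < 2 ^ (r * r) := by
  have hr : r ≠ 0 := by
    rintro rfl
    nlinarith
  have hfac : (0 : ℝ) < r ! := by positivity
  have hmr' : (4 : ℝ) * m ^ 2 ≤ 2 ^ r := by exact_mod_cast hmr
  have hchoose : (m.choose r : ℝ) ≤ m ^ r / r ! := Nat.choose_le_pow_div r m
  suffices (m.choose r : ℝ) * m.choose r * (r ! * (r + 1) ^ r) < 2 ^ (r * r) by exact_mod_cast this
  calc (m.choose r : ℝ) * m.choose r * (r ! * (r + 1) ^ r)
      ≤ m ^ r / r ! * (m ^ r / r !) * (r ! * (r + 1) ^ r) := by gcongr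
    _ = (m ^ 2) ^ r * ((r + 1) ^ r / r !) := by field_simp; ring
    _ ≤ (m ^ 2) ^ r * Real.exp r := by
      gcongr
      rw [div_le_iff₀ hfac]
      exact add_one_pow_le_exp_mul_factorial r
    _ < (m ^ 2) ^ r * 4 ^ r := by
      gcongr
      rw [← Real.exp_one_pow]
      exact pow_lt_pow_left₀ (Real.exp_one_lt_d9.trans (by norm_num)) (Real.exp_pos 1).le hr
    _ = (4 * m ^ 2) ^ r := by ring
    _ ≤ (2 ^ r) ^ r := by gcongr
    _ = 2 ^ (r * r) := by rw [← pow_mul]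

theorem exists_orientation_no_acyclic_Krr_general (m r : ℕ) (hm : 0 < m)
    (h : 2 + 2 * Real.logb 2 (m : ℝ) ≤ (r : ℝ)) :
    ∃ D : (Fin m ⊕ Fin m) → (Fin m ⊕ Fin m) → Prop,
      IsOrientation (completeBipartiteGraph (Fin m) (Fin m)) D ∧
      ∀ S T : Finset (Fin m), S.card = r → T.card = r →
        HasDirCycleOn D
          {p : Fin m ⊕ Fin m | (∃ i ∈ S, p = Sum.inl i) ∨ (∃ j ∈ T, p = Sum.inr j)} := by
  have hcount : (Fintype.card (Fin m)).choose r * (Fintype.card (Fin m)).choose r *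
      (r ! * (r + 1) ^ r) < 2 ^ (r * r) := by
    rw [Fintype.card_fin]
    exact choose_mul_choose_mul_lt_two_pow hm (four_mul_sq_le_two_pow_of_logb_le hm h)
  obtain ⟨M, hM⟩ := exists_forall_hasSwitch hcount
  exact ⟨bipartiteOrientation M, isOrientation_bipartiteOrientation M,
    fun S T hS hT => hasDirCycleOn_bipartiteOrientation (hM S T hS hT)⟩

/-- There is an orientation of `K_{m,m}` (with `2 + 2 log₂ m ≤ r`) such that no
copy of `K_{r,r}`, given by choosing `r` vertices on each side of the
bipartition, is acyclic. -/
theorem exists_orientation_no_acyclic_Krr (m r : ℕ) (hm : 0 < m) (hr : 0 < r)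
    (h : 2 + 2 * Real.logb 2 (m : ℝ) ≤ (r : ℝ)) :
    ∃ D : (Fin m ⊕ Fin m) → (Fin m ⊕ Fin m) → Prop,
      IsOrientation (completeBipartiteGraph (Fin m) (Fin m)) D ∧
      ∀ S T : Finset (Fin m), S.card = r → T.card = r →
        HasDirCycleOn D
          {p : Fin m ⊕ Fin m | (∃ i ∈ S, p = Sum.inl i) ∨ (∃ j ∈ T, p = Sum.inr j)} :=
  exists_orientation_no_acyclic_Krr_general m r hm h
end

section
/- Let n, k, t, x be nonnegative integers with 0 < k < n and x < k·t. Then the Kneser graph KG(n·t, k·t − x) contains the blow-up of KG(n, k) with power C(k(t−1), x) as a subgraph. Furthermore, if x < t it contains the blow-up of KG(n, k) with power C(k·t, x), and if x = t it contains the blow-up of KG(n, k) with power C(k·t, x) − k. -/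
/-- The Kneser graph `KG(n,k)`: vertices are the `k`-element subsets of an
`n`-element set, adjacent iff disjoint. -/
def kneserG (n k : ℕ) : SimpleGraph {s : Finset (Fin n) // s.card = k} where
  Adj a b := a ≠ b ∧ Disjoint a.val b.val
  symm := ⟨fun _ _ h => ⟨h.1.symm, h.2.symm⟩⟩
  loopless := ⟨fun _ h => h.1 rfl⟩

/-- `G` contains the blow-up of `H` with power `m` as a subgraph: there is an
injective graph homomorphism (preserving adjacency) from `H^(m)` into `G`. -/
def ContainsBlowup {β α : Type*} (G : SimpleGraph β) (H : SimpleGraph α) (m : ℕ) : Prop :=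
  ∃ f : α × Fin m → β, Function.Injective f ∧
    ∀ a b : α × Fin m, (blowup H m).Adj a b → G.Adj (f a) (f b)

open Finset Function

theorem containsBlowup_of_finsets {α β : Type*} {G : SimpleGraph β} {H : SimpleGraph α}
    {m : ℕ} (F : α → Finset β) (hm : ∀ a, m ≤ #(F a)) (hF : Pairwise (Disjoint on F))
    (hadj : ∀ a b, H.Adj a b → ∀ u ∈ F a, ∀ v ∈ F b, G.Adj u v) :
    ContainsBlowup G H m := by
  let e : α × Fin m → β := fun p => (F p.1).equivFin.symm (Fin.castLE (hm p.1) p.2)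
  have he : ∀ p, e p ∈ F p.1 := fun p => ((F p.1).equivFin.symm _).2
  refine ⟨e, ?_, fun p q hpq => hadj _ _ hpq _ (he p) _ (he q)⟩
  rintro ⟨a, i⟩ ⟨b, j⟩ hij
  obtain rfl : a = b := by
    by_contra hab
    exact Finset.disjoint_left.mp (hF hab) (he (a, i)) (hij ▸ he (b, j))
  have := (F a).equivFin.symm.injective (Subtype.ext hij)
  exact Prod.ext rfl (Fin.castLE_injective _ this)

theorem kneserG_adj_of_disjoint {N r : ℕ} (hr : 0 < r) {a b : {s : Finset (Fin N) // #s = r}}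
    (h : Disjoint a.1 b.1) : (kneserG N r).Adj a b := by
  refine ⟨fun hab => ?_, h⟩
  rw [hab, disjoint_self, bot_eq_empty, ← card_eq_zero, b.2] at h
  omega

section Thickening

variable {α ι : Type*} [Fintype ι]

theorem card_fiber (a : α) : #(({a} : Finset α) ×ˢ (univ : Finset ι)) = Fintype.card ι := by
  rw [card_product, card_singleton, card_univ, one_mul]

variable [DecidableEq α] [DecidableEq ι]

def fiberFreeSubsets (s : Finset α) (ι : Type*) [Fintype ι] [DecidableEq ι] (x : ℕ) :
    Finset (Finset (α × ι)) :=
  {A ∈ (s ×ˢ univ).powersetCard x | ∀ a ∈ s, ¬ {a} ×ˢ univ ⊆ A}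

def thicken (s : Finset α) (A : Finset (α × ι)) : Finset (α × ι) :=
  (s ×ˢ univ) \ A

variable {s : Finset α} {A : Finset (α × ι)} {x : ℕ}

theorem mem_fiberFreeSubsets :
    A ∈ fiberFreeSubsets s ι x ↔
      A ⊆ s ×ˢ univ ∧ #A = x ∧ ∀ a ∈ s, ¬ {a} ×ˢ univ ⊆ A := by
  rw [fiberFreeSubsets, mem_filter, mem_powersetCard, and_assoc]

theorem card_thicken (hA : A ∈ fiberFreeSubsets s ι x) :
    #(thicken s A) = #s * Fintype.card ι - x := by
  obtain ⟨hsub, hcard, -⟩ := mem_fiberFreeSubsets.mp hA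
  rw [thicken, card_sdiff_of_subset hsub, card_product, card_univ, hcard]

theorem image_fst_thicken (hA : A ∈ fiberFreeSubsets s ι x) :
    (thicken s A).image Prod.fst = s := by
  obtain ⟨-, -, hfree⟩ := mem_fiberFreeSubsets.mp hA
  ext a
  simp only [thicken, mem_image, mem_sdiff, mem_product, mem_univ, and_true]
  constructor
  · rintro ⟨p, ⟨hp, -⟩, rfl⟩
    exact hp
  · intro ha
    obtain ⟨p, hp, hpA⟩ := not_subset.mp (hfree a ha)
    rw [mem_product, mem_singleton] at hp
    exact ⟨p, ⟨hp.1 ▸ ha, hpA⟩, hp.1⟩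

theorem thicken_injOn :
    Set.InjOn (thicken s) (fiberFreeSubsets s ι x : Set (Finset (α × ι))) := by
  intro A hA B hB hAB
  rw [← Finset.sdiff_sdiff_eq_self (mem_fiberFreeSubsets.mp hA).1,
    ← Finset.sdiff_sdiff_eq_self (mem_fiberFreeSubsets.mp hB).1]
  exact congrArg _ hAB

theorem disjoint_thicken {s' : Finset α} {A' : Finset (α × ι)} (h : Disjoint s s') :
    Disjoint (thicken s A) (thicken s' A') :=
  (disjoint_product.mpr (Or.inl h)).mono sdiff_subset sdiff_subset

theorem choose_le_card_fiberFreeSubsets (j₀ : ι) :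
    (#s * (Fintype.card ι - 1)).choose x ≤ #(fiberFreeSubsets s ι x) := by
  have hsub : (s ×ˢ univ.erase j₀).powersetCard x ⊆ fiberFreeSubsets s ι x := by
    intro A hA
    obtain ⟨hA, hcard⟩ := mem_powersetCard.mp hA
    refine mem_fiberFreeSubsets.mpr
      ⟨hA.trans (product_subset_product_right (erase_subset _ _)), hcard, fun a _ hfib => ?_⟩
    have := mem_product.mp (hA (hfib (mk_mem_product (mem_singleton_self a) (mem_univ j₀))))
    exact (mem_erase.mp this.2).1 rfl
  calc (#s * (Fintype.card ι - 1)).choose x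
      = #((s ×ˢ univ.erase j₀).powersetCard x) := by
        rw [card_powersetCard, card_product, card_erase_of_mem (mem_univ _), card_univ]
    _ ≤ _ := card_le_card hsub

theorem card_fiberFreeSubsets_of_lt (hx : x < Fintype.card ι) :
    #(fiberFreeSubsets s ι x) = (#s * Fintype.card ι).choose x := by
  rw [fiberFreeSubsets, filter_true_of_mem, card_powersetCard, card_product, card_univ]
  intro A hA a _ hfib
  have := card_le_card hfib
  rw [card_fiber, (mem_powersetCard.mp hA).2] at this
  omega

theorem fiberFreeSubsets_card_eq :
    fiberFreeSubsets s ι (Fintype.card ι) =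
      (s ×ˢ univ).powersetCard (Fintype.card ι) \ s.image fun a => {a} ×ˢ univ := by
  ext A
  simp only [mem_fiberFreeSubsets, mem_sdiff, mem_powersetCard, mem_image, not_exists, not_and]
  constructor
  · rintro ⟨hsub, hcard, hfree⟩
    exact ⟨⟨hsub, hcard⟩, fun a ha hA => hfree a ha hA.le⟩
  · rintro ⟨⟨hsub, hcard⟩, hne⟩
    refine ⟨hsub, hcard, fun a ha hfib => hne a ha ?_⟩
    exact eq_of_subset_of_card_le hfib (by rw [hcard, card_fiber])

/-- The only `card ι`-sets containing a fibre are the fibres themselves. -/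
theorem card_fiberFreeSubsets_card [Nonempty ι] :
    #(fiberFreeSubsets s ι (Fintype.card ι)) =
      (#s * Fintype.card ι).choose (Fintype.card ι) - #s := by
  have hfib_inj : Injective fun a : α => ({a} : Finset α) ×ˢ (univ : Finset ι) := by
    intro a b hab
    simpa only [product_image_fst univ_nonempty, singleton_inj] using congrArg (image Prod.fst) hab
  have hfib_sub : s.image (fun a => ({a} : Finset α) ×ˢ (univ : Finset ι)) ⊆
      (s ×ˢ univ).powersetCard (Fintype.card ι) := by
    intro B hB
    obtain ⟨a, ha, rfl⟩ := mem_image.mp hB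
    exact mem_powersetCard.mpr
      ⟨product_subset_product_left (singleton_subset_iff.mpr ha), card_fiber a⟩
  rw [fiberFreeSubsets_card_eq, card_sdiff_of_subset hfib_sub, card_powersetCard, card_product,
    card_univ, card_image_of_injective _ hfib_inj]

end Thickening

section Kneser

variable {n k t x : ℕ}

def thickenedVertex (S : {s : Finset (Fin n) // #s = k})
    (A : fiberFreeSubsets S.1 (Fin t) x) : {D : Finset (Fin (n * t)) // #D = k * t - x} :=
  ⟨(thicken S.1 A.1).map finProdFinEquiv.toEmbedding, by
    rw [card_map, card_thicken A.2, S.2, Fintype.card_fin]⟩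

theorem thickenedVertex_injective (S : {s : Finset (Fin n) // #s = k}) :
    Injective (thickenedVertex (t := t) (x := x) S) := by
  intro A B hAB
  have := map_injective _ (congrArg Subtype.val hAB)
  exact Subtype.ext (thicken_injOn A.2 B.2 this)

theorem eq_of_thickenedVertex_eq {S S' : {s : Finset (Fin n) // #s = k}}
    {A : fiberFreeSubsets S.1 (Fin t) x} {A' : fiberFreeSubsets S'.1 (Fin t) x}
    (h : thickenedVertex S A = thickenedVertex S' A') : S = S' := by
  have := map_injective _ (congrArg Subtype.val h)
  rw [Subtype.ext_iff, ← image_fst_thicken A.2, ← image_fst_thicken A'.2, this]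

theorem disjoint_thickenedVertex {S S' : {s : Finset (Fin n) // #s = k}}
    (A : fiberFreeSubsets S.1 (Fin t) x) (A' : fiberFreeSubsets S'.1 (Fin t) x)
    (h : Disjoint S.1 S'.1) : Disjoint (thickenedVertex S A).1 (thickenedVertex S' A').1 :=
  (disjoint_map _).mpr (disjoint_thicken h)

theorem containsBlowup_kneserG_of_le_card_fiberFreeSubsets {m : ℕ} (hx : x < k * t)
    (hm : ∀ s : Finset (Fin n), #s = k → m ≤ #(fiberFreeSubsets s (Fin t) x)) :
    ContainsBlowup (kneserG (n * t) (k * t - x)) (kneserG n k) m := by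
  refine containsBlowup_of_finsets
    (fun S => univ.map ⟨thickenedVertex S, thickenedVertex_injective S⟩) (fun S => ?_) ?_ ?_
  · rw [card_map, card_univ, Fintype.card_coe]
    exact hm S.1 S.2
  · intro S S' hSS'
    simp only [onFun, disjoint_left, mem_map, mem_univ, true_and, Embedding.coeFn_mk]
    rintro _ ⟨A, rfl⟩ ⟨A', hA'⟩
    exact hSS' (eq_of_thickenedVertex_eq hA').symm
  · rintro S S' ⟨-, hSS'⟩ _ hD _ hD'
    simp only [mem_map, mem_univ, true_and, Embedding.coeFn_mk] at hD hD'
    obtain ⟨⟨A, rfl⟩, ⟨A', rfl⟩⟩ := And.intro hD hD'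
    exact kneserG_adj_of_disjoint (Nat.sub_pos_of_lt hx) (disjoint_thickenedVertex A A' hSS')

end Kneser

theorem kneser_contains_blowup_general (n k t x : ℕ)
    (hx : x < k * t) :
    ContainsBlowup (kneserG (n * t) (k * t - x)) (kneserG n k) ((k * (t - 1)).choose x) ∧
    (x < t → ContainsBlowup (kneserG (n * t) (k * t - x)) (kneserG n k) ((k * t).choose x)) ∧
    (x = t → ContainsBlowup (kneserG (n * t) (k * t - x)) (kneserG n k) ((k * t).choose x - k)) := by
  have ht : 0 < t := Nat.pos_of_mul_pos_left (Nat.zero_lt_of_lt hx)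
  refine ⟨?_, fun hxt => ?_, fun hxt => ?_⟩ <;>
    refine containsBlowup_kneserG_of_le_card_fiberFreeSubsets hx fun s hs => ?_
  · simpa only [hs, Fintype.card_fin] using
      choose_le_card_fiberFreeSubsets (s := s) (x := x) (⟨0, ht⟩ : Fin t)
  · rw [card_fiberFreeSubsets_of_lt (by rwa [Fintype.card_fin]), hs, Fintype.card_fin]
  · subst hxt
    have : Nonempty (Fin x) := ⟨⟨0, ht⟩⟩
    simpa only [hs, Fintype.card_fin] using (card_fiberFreeSubsets_card (s := s) (ι := Fin x)).ge

/-- **Theorem 3.3.** For nonnegative integers `n,k,t,x` with `0 < k < n` and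
`x < k·t`, the Kneser graph `KG(nt, kt−x)` contains the blow-up of `KG(n,k)`
with power `C(k(t−1), x)`; furthermore with power `C(kt, x)` when `x < t`, and
with power `C(kt, x) − k` when `x = t`. -/
theorem kneser_contains_blowup (n k t x : ℕ) (hk : 0 < k) (hkn : k < n)
    (hx : x < k * t) :
    ContainsBlowup (kneserG (n * t) (k * t - x)) (kneserG n k) ((k * (t - 1)).choose x) ∧
    (x < t → ContainsBlowup (kneserG (n * t) (k * t - x)) (kneserG n k) ((k * t).choose x)) ∧
    (x = t → ContainsBlowup (kneserG (n * t) (k * t - x)) (kneserG n k) ((k * t).choose x - k)) :=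
  kneser_contains_blowup_general n k t x hx
end
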